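/- arXiv:1710.07979 — 5 statements merged into one kernel-verified Lean document; each statement's English description precedes it below -/
import Mathlib

section
/- Let E be a complex inner product space, n a natural number, f : Fin n → E a family of vectors with ‖f i‖ = 1 for all i, and α : Fin n → ℂ with ∑_i ‖α i‖² = 1. If ‖∑_i ‖α i‖² • f i‖² = 1, then for all indices i, j with α i ≠ 0 and α j ≠ 0 one has f i = f j. -/
/-!
The weights `‖α i‖²` form a probability vector and `x ↦ ‖x‖²` is strictly convex, so Jensen's
inequality `‖∑ i, w i • f i‖² ≤ ∑ i, w i * ‖f i‖² = 1` is an equality only if all the `f i` of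
positive weight coincide.
-/

open Finset

section RealInnerProductSpace

variable {F : Type*} [NormedAddCommGroup F] [InnerProductSpace ℝ F]

-- `‖·‖²` is `2`-strongly convex: subtracting `2 / 2 * ‖x‖²` leaves the convex function `0`.
theorem strictConvexOn_univ_norm_sq : StrictConvexOn ℝ Set.univ fun x : F => ‖x‖ ^ 2 :=
  (strongConvexOn_iff_convex.2 (by simpa using convexOn_const (0 : ℝ) convex_univ)).strictConvexOn
    two_pos

theorem eq_of_norm_sum_smul_sq_eq_sum_mul_norm_sq {ι : Type*} {t : Finset ι} {w : ι → ℝ}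
    {p : ι → F} (h₀ : ∀ i ∈ t, 0 ≤ w i) (h₁ : ∑ i ∈ t, w i = 1)
    (h : ‖∑ i ∈ t, w i • p i‖ ^ 2 = ∑ i ∈ t, w i * ‖p i‖ ^ 2) ⦃j : ι⦄ (hj : j ∈ t) (hwj : w j ≠ 0)
    ⦃k : ι⦄ (hk : k ∈ t) (hwk : w k ≠ 0) : p j = p k :=
  (strictConvexOn_univ_norm_sq.map_sum_eq_iff_of_nonneg h₀ h₁ fun _ _ => Set.mem_univ _).1 h
    hj hwj hk hwk

end RealInnerProductSpace

/-- For unit vectors `f i` and complex amplitudes `α i` with `∑ i, ‖α i‖² = 1`: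
if `‖∑ i, ‖α i‖² • f i‖² = 1`, then `f i = f j` whenever `α i ≠ 0` and `α j ≠ 0`. -/
theorem stmt_4 {E : Type*} [NormedAddCommGroup E] [InnerProductSpace ℂ E]
    (n : ℕ) (f : Fin n → E) (hf : ∀ i, ‖f i‖ = 1) (α : Fin n → ℂ)
    (hα : ∑ i, ‖α i‖ ^ 2 = 1)
    (hp : ‖∑ i, (‖α i‖ ^ 2 : ℝ) • f i‖ ^ 2 = 1) :
    ∀ i j, α i ≠ 0 → α j ≠ 0 → f i = f j := by
  let _ : InnerProductSpace ℝ E := InnerProductSpace.rclikeToReal ℂ E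
  intro i j hi hj
  have hJensen : ‖∑ i, (‖α i‖ ^ 2 : ℝ) • f i‖ ^ 2 = ∑ i, ‖α i‖ ^ 2 * ‖f i‖ ^ 2 := by
    simp only [hf, one_pow, mul_one, hα, hp]
  exact eq_of_norm_sum_smul_sq_eq_sum_mul_norm_sq (fun i _ => sq_nonneg ‖α i‖) hα hJensen
    (mem_univ i) (by positivity) (mem_univ j) (by positivity)
end

section
/- Fix a positive integer P, an angle θ ∈ ℝ, natural number t, r, l ∈ ZMod P, and coin state s ∈ {R, L}. On H = EuclideanSpace ℂ (ZMod P × Bool) with basis |x, c⟩, let U = S ∘ C(θ) be the quantum-walk step operator, where S|x,R⟩ = |x+1,R⟩, S|x,L⟩ = |x−1,L⟩, C(θ)|x,R⟩ = cos θ·|x,R⟩ − sin θ·|x,L⟩, C(θ)|x,L⟩ = sin θ·|x,R⟩ + cos θ·|x,L⟩, and let T_r|x,c⟩ = |x+r,c⟩. Then (U^t)⁻¹ applied to T_r (U^t |l, s⟩) equals |l + r, s⟩; in particular, Alice's position measurement on the decrypted state yields the outcome i₀ = l + r (mod P) with probability 1. -/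
/-!
The translation `T_r` commutes with both the shift `S` and the coin `C`, since each acts on
every position in the same way; hence it commutes with `U^t`, and a left inverse of `U`
undoes `U^t` on the other side of `T_r`, leaving `T_r |l, s⟩ = |l + r, s⟩`.
-/

open EuclideanSpace

section
variable {𝕜 : Type*} [RCLike 𝕜] {G : Type*} [AddCommGroup G] [Fintype G] [DecidableEq G]

lemma linearMap_ext_single {ι : Type*} [Fintype ι] [DecidableEq ι]
    {f g : EuclideanSpace 𝕜 ι →ₗ[𝕜] EuclideanSpace 𝕜 ι}
    (h : ∀ i, f (single i 1) = g (single i 1)) : f = g :=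
  (EuclideanSpace.basisFun ι 𝕜).toBasis.ext fun i => by simpa using h i

variable {T : EuclideanSpace 𝕜 (G × Bool) →ₗ[𝕜] EuclideanSpace 𝕜 (G × Bool)} {r : G}

lemma shift_comp_translate {S : EuclideanSpace 𝕜 (G × Bool) →ₗ[𝕜] EuclideanSpace 𝕜 (G × Bool)}
    (g : G)
    (hSR : ∀ x, S (single (x, true) 1) = single (x + g, true) 1)
    (hSL : ∀ x, S (single (x, false) 1) = single (x - g, false) 1)
    (hT : ∀ x c, T (single (x, c) 1) = single (x + r, c) 1) :
    S ∘ₗ T = T ∘ₗ S :=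
  linearMap_ext_single fun
    | (x, true) => by simp [hSR, hT, add_right_comm]
    | (x, false) => by simp [hSL, hT, sub_add_eq_add_sub]

lemma coin_comp_translate {C : EuclideanSpace 𝕜 (G × Bool) →ₗ[𝕜] EuclideanSpace 𝕜 (G × Bool)}
    (a b : 𝕜)
    (hCR : ∀ x, C (single (x, true) 1) = a • single (x, true) 1 - b • single (x, false) 1)
    (hCL : ∀ x, C (single (x, false) 1) = b • single (x, true) 1 + a • single (x, false) 1)
    (hT : ∀ x c, T (single (x, c) 1) = single (x + r, c) 1) :
    C ∘ₗ T = T ∘ₗ C :=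
  linearMap_ext_single fun
    | (x, true) => by simp [hCR, hT]
    | (x, false) => by simp [hCL, hT]

end

lemma left_inv_pow_apply_of_commute {R M : Type*} [Semiring R] [AddCommMonoid M] [Module R M]
    {T U V : Module.End R M} (hVU : V * U = 1) (hTU : Commute T U) (n : ℕ) (v : M) :
    (V ^ n) (T ((U ^ n) v)) = T v := by
  rw [← Module.End.mul_apply, ← Module.End.mul_apply, mul_assoc, (hTU.pow_right n).eq,
    ← mul_assoc, pow_mul_pow_eq_one n hVU, one_mul]

theorem stmt_7_general (P : ℕ) [NeZero P] (θ : ℝ) (t : ℕ) (r l : ZMod P) (s : Bool)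
    (S C T Uinv :
      EuclideanSpace ℂ (ZMod P × Bool) →ₗ[ℂ] EuclideanSpace ℂ (ZMod P × Bool))
    (hSR : ∀ x : ZMod P,
      S (EuclideanSpace.single (x, true) 1) = EuclideanSpace.single (x + 1, true) 1)
    (hSL : ∀ x : ZMod P,
      S (EuclideanSpace.single (x, false) 1) = EuclideanSpace.single (x - 1, false) 1)
    (hCR : ∀ x : ZMod P,
      C (EuclideanSpace.single (x, true) 1) =
        (Real.cos θ : ℂ) • EuclideanSpace.single (x, true) 1
          - (Real.sin θ : ℂ) • EuclideanSpace.single (x, false) 1)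
    (hCL : ∀ x : ZMod P,
      C (EuclideanSpace.single (x, false) 1) =
        (Real.sin θ : ℂ) • EuclideanSpace.single (x, true) 1
          + (Real.cos θ : ℂ) • EuclideanSpace.single (x, false) 1)
    (hT : ∀ (x : ZMod P) (c : Bool),
      T (EuclideanSpace.single (x, c) 1) = EuclideanSpace.single (x + r, c) 1)
    (hUinv₁ : Uinv ∘ₗ (S ∘ₗ C) = LinearMap.id) :
    (Uinv ^ t) (T (((S ∘ₗ C) ^ t) (EuclideanSpace.single (l, s) 1))) =
        EuclideanSpace.single (l + r, s) 1 ∧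
      ∑ c : Bool,
        ‖(Uinv ^ t) (T (((S ∘ₗ C) ^ t) (EuclideanSpace.single (l, s) 1))) (l + r, c)‖ ^ 2
          = 1 := by
  have hTS : Commute T S := (shift_comp_translate 1 hSR hSL hT).symm
  have hTC : Commute T C := (coin_comp_translate _ _ hCR hCL hT).symm
  have decrypt := left_inv_pow_apply_of_commute hUinv₁ (hTS.mul_right hTC) t (single (l, s) 1)
  rw [hT] at decrypt
  refine ⟨decrypt, ?_⟩
  rw [decrypt]
  cases s <;> simp

/-- Correctness of key decryption in Protocol 1: inverting the walk on the translated
state `T_r (U^t |l,s⟩)` yields exactly the basis state `|l+r, s⟩`, so Alice's position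
measurement gives the outcome `l + r (mod P)` with probability 1.
Coin `true` is `R`, `false` is `L`. -/
theorem stmt_7 (P : ℕ) [NeZero P] (θ : ℝ) (t : ℕ) (r l : ZMod P) (s : Bool)
    (S C T Uinv :
      EuclideanSpace ℂ (ZMod P × Bool) →ₗ[ℂ] EuclideanSpace ℂ (ZMod P × Bool))
    (hSR : ∀ x : ZMod P,
      S (EuclideanSpace.single (x, true) 1) = EuclideanSpace.single (x + 1, true) 1)
    (hSL : ∀ x : ZMod P,
      S (EuclideanSpace.single (x, false) 1) = EuclideanSpace.single (x - 1, false) 1)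
    (hCR : ∀ x : ZMod P,
      C (EuclideanSpace.single (x, true) 1) =
        (Real.cos θ : ℂ) • EuclideanSpace.single (x, true) 1
          - (Real.sin θ : ℂ) • EuclideanSpace.single (x, false) 1)
    (hCL : ∀ x : ZMod P,
      C (EuclideanSpace.single (x, false) 1) =
        (Real.sin θ : ℂ) • EuclideanSpace.single (x, true) 1
          + (Real.cos θ : ℂ) • EuclideanSpace.single (x, false) 1)
    (hT : ∀ (x : ZMod P) (c : Bool),
      T (EuclideanSpace.single (x, c) 1) = EuclideanSpace.single (x + r, c) 1)
    (hUinv₁ : Uinv ∘ₗ (S ∘ₗ C) = LinearMap.id)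
    (hUinv₂ : (S ∘ₗ C) ∘ₗ Uinv = LinearMap.id) :
    (Uinv ^ t) (T (((S ∘ₗ C) ^ t) (EuclideanSpace.single (l, s) 1))) =
        EuclideanSpace.single (l + r, s) 1 ∧
      ∑ c : Bool,
        ‖(Uinv ^ t) (T (((S ∘ₗ C) ^ t) (EuclideanSpace.single (l, s) 1))) (l + r, c)‖ ^ 2
          = 1 :=
  stmt_7_general P θ t r l s S C T Uinv hSR hSL hCR hCL hT hUinv₁
end

section
/- Let P be a positive even integer and θ ∈ ℝ. On H = EuclideanSpace ℂ (ZMod P × Bool) with basis |x, c⟩ (x ∈ ZMod P, c ∈ {R, L}), let U = S ∘ C(θ) be the quantum-walk step operator, where S|x,R⟩ = |x+1,R⟩, S|x,L⟩ = |x−1,L⟩, C(θ)|x,R⟩ = cos θ·|x,R⟩ − sin θ·|x,L⟩, C(θ)|x,L⟩ = sin θ·|x,R⟩ + cos θ·|x,L⟩. Let π : ZMod P → ZMod 2 be the canonical ring homomorphism (which exists since 2 divides P). Then for every t ∈ ℕ, all positions x, l ∈ ZMod P and all coins c, s ∈ {R, L}: if π(x − l) ≠ (t : ZMod 2), then the amplitude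 ⟨x, c | U^t | l, s⟩ = 0. -/
/-!
The step `S ∘ C` moves amplitude only between neighbouring positions: the coin `C` acts at a
fixed position and the shift `S` moves every position by `±1`. Along a ring homomorphism
`φ : X →+* ZMod 2` both `+1` and `-1` flip the parity, so `S ∘ C` maps the span of the basis
vectors whose position has parity `p` into the span of those of parity `p + 1`. Hence `U ^ t |l, s⟩`
lies in the span for parity `φ l + t`, whose coordinates vanish at every other position.
-/

open Submodule

theorem EuclideanSpace.apply_eq_zero_of_mem_span_single {𝕜 ι : Type*} [RCLike 𝕜] [DecidableEq ι]
    {s : Set ι} {v : EuclideanSpace 𝕜 ι}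
    (hv : v ∈ span 𝕜 ((fun i => EuclideanSpace.single i (1 : 𝕜)) '' s)) {i : ι} (hi : i ∉ s) :
    v i = 0 := by
  induction hv using Submodule.span_induction with
  | mem _ hw =>
    obtain ⟨j, hj, rfl⟩ := hw
    simp [show i ≠ j from fun h => hi (h ▸ hj)]
  | zero => rfl
  | add _ _ _ _ hv hw => simp [hv, hw]
  | smul _ _ _ hv => simp [hv]

section ParityClass

variable {X : Type*} [Ring X] [DecidableEq X] (φ : X →+* ZMod 2)

def parityClass (p : ZMod 2) : Submodule ℂ (EuclideanSpace ℂ (X × Bool)) :=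
  span ℂ ((fun i => EuclideanSpace.single i 1) '' {i | φ i.1 = p})

variable {φ}

theorem single_mem_parityClass {p : ZMod 2} {y : X} (hy : φ y = p) (d : Bool) :
    EuclideanSpace.single (y, d) 1 ∈ parityClass φ p :=
  subset_span ⟨(y, d), hy, rfl⟩

theorem parityClass_le_comap_coin {θ : ℝ}
    {C : EuclideanSpace ℂ (X × Bool) →ₗ[ℂ] EuclideanSpace ℂ (X × Bool)}
    (hCR : ∀ x : X, C (EuclideanSpace.single (x, true) 1) =
      (Real.cos θ : ℂ) • EuclideanSpace.single (x, true) 1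
        - (Real.sin θ : ℂ) • EuclideanSpace.single (x, false) 1)
    (hCL : ∀ x : X, C (EuclideanSpace.single (x, false) 1) =
      (Real.sin θ : ℂ) • EuclideanSpace.single (x, true) 1
        + (Real.cos θ : ℂ) • EuclideanSpace.single (x, false) 1)
    (p : ZMod 2) : parityClass φ p ≤ (parityClass φ p).comap C := by
  refine span_le.2 ?_
  rintro _ ⟨⟨y, d⟩, hy : φ y = p, rfl⟩
  have hR := single_mem_parityClass hy true
  have hL := single_mem_parityClass hy false
  cases d
  · simpa [hCL] using add_mem (smul_mem _ _ hR) (smul_mem _ _ hL)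
  · simpa [hCR] using sub_mem (smul_mem _ _ hR) (smul_mem _ _ hL)

theorem parityClass_le_comap_shift
    {S : EuclideanSpace ℂ (X × Bool) →ₗ[ℂ] EuclideanSpace ℂ (X × Bool)}
    (hSR : ∀ x : X,
      S (EuclideanSpace.single (x, true) 1) = EuclideanSpace.single (x + 1, true) 1)
    (hSL : ∀ x : X,
      S (EuclideanSpace.single (x, false) 1) = EuclideanSpace.single (x - 1, false) 1)
    (p : ZMod 2) : parityClass φ p ≤ (parityClass φ (p + 1)).comap S := by
  refine span_le.2 ?_
  rintro _ ⟨⟨y, d⟩, hy : φ y = p, rfl⟩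
  cases d
  · rw [SetLike.mem_coe, mem_comap, hSL]
    exact single_mem_parityClass (by rw [map_sub, map_one, hy, CharTwo.sub_eq_add]) _
  · rw [SetLike.mem_coe, mem_comap, hSR]
    exact single_mem_parityClass (by rw [map_add, map_one, hy]) _

end ParityClass

theorem stmt_10_general (P : ℕ) (hP2 : 2 ∣ P) (θ : ℝ)
    (S C : EuclideanSpace ℂ (ZMod P × Bool) →ₗ[ℂ] EuclideanSpace ℂ (ZMod P × Bool))
    (hSR : ∀ x : ZMod P,
      S (EuclideanSpace.single (x, true) 1) = EuclideanSpace.single (x + 1, true) 1)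
    (hSL : ∀ x : ZMod P,
      S (EuclideanSpace.single (x, false) 1) = EuclideanSpace.single (x - 1, false) 1)
    (hCR : ∀ x : ZMod P,
      C (EuclideanSpace.single (x, true) 1) =
        (Real.cos θ : ℂ) • EuclideanSpace.single (x, true) 1
          - (Real.sin θ : ℂ) • EuclideanSpace.single (x, false) 1)
    (hCL : ∀ x : ZMod P,
      C (EuclideanSpace.single (x, false) 1) =
        (Real.sin θ : ℂ) • EuclideanSpace.single (x, true) 1
          + (Real.cos θ : ℂ) • EuclideanSpace.single (x, false) 1)
    (t : ℕ) (x l : ZMod P) (c s : Bool)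
    (hparity : ZMod.castHom hP2 (ZMod 2) (x - l) ≠ (t : ZMod 2)) :
    (((S ∘ₗ C) ^ t) (EuclideanSpace.single (l, s) 1)) (x, c) = 0 := by
  set φ := ZMod.castHom hP2 (ZMod 2)
  have hstep (p : ZMod 2) : parityClass φ p ≤ (parityClass φ (p + 1)).comap (S ∘ₗ C) :=
    (parityClass_le_comap_coin hCR hCL p).trans
      (comap_mono (parityClass_le_comap_shift hSR hSL p))
  have hmem : ∀ n : ℕ,
      ((S ∘ₗ C) ^ n) (EuclideanSpace.single (l, s) 1) ∈ parityClass φ (φ l + n) := by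
    intro n
    induction n with
    | zero => simpa using single_mem_parityClass rfl s
    | succ n ih =>
      rw [pow_succ', Module.End.mul_apply, Nat.cast_succ, ← add_assoc]
      exact hstep _ ih
  refine EuclideanSpace.apply_eq_zero_of_mem_span_single (hmem t) fun hx => hparity ?_
  rw [map_sub, show φ x = φ l + t from hx, add_sub_cancel_left]

/-- On a cycle with an even number `P` of nodes, the amplitudes of the quantum walk
`U = S ∘ C(θ)` after `t` steps, started from a basis state `|l, s⟩`, vanish on every
position `x` whose parity differs from that of `l + t`:
if `x - l ≢ t (mod 2)` then `⟨x, c| U^t |l, s⟩ = 0`.  Coin `true` is `R`, `false` is `L`. -/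
theorem stmt_10 (P : ℕ) [NeZero P] (hP2 : 2 ∣ P) (θ : ℝ)
    (S C : EuclideanSpace ℂ (ZMod P × Bool) →ₗ[ℂ] EuclideanSpace ℂ (ZMod P × Bool))
    (hSR : ∀ x : ZMod P,
      S (EuclideanSpace.single (x, true) 1) = EuclideanSpace.single (x + 1, true) 1)
    (hSL : ∀ x : ZMod P,
      S (EuclideanSpace.single (x, false) 1) = EuclideanSpace.single (x - 1, false) 1)
    (hCR : ∀ x : ZMod P,
      C (EuclideanSpace.single (x, true) 1) =
        (Real.cos θ : ℂ) • EuclideanSpace.single (x, true) 1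
          - (Real.sin θ : ℂ) • EuclideanSpace.single (x, false) 1)
    (hCL : ∀ x : ZMod P,
      C (EuclideanSpace.single (x, false) 1) =
        (Real.sin θ : ℂ) • EuclideanSpace.single (x, true) 1
          + (Real.cos θ : ℂ) • EuclideanSpace.single (x, false) 1)
    (t : ℕ) (x l : ZMod P) (c s : Bool)
    (hparity : ZMod.castHom hP2 (ZMod 2) (x - l) ≠ (t : ZMod 2)) :
    (((S ∘ₗ C) ^ t) (EuclideanSpace.single (l, s) 1)) (x, c) = 0 :=
  stmt_10_general P hP2 θ S C hSR hSL hCR hCL t x l c s hparity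
end

section
/- Let P and t be natural numbers with 2t < P and let q ∈ ZMod P. On H = EuclideanSpace ℂ (ZMod P × Bool) with basis |x, c⟩, define the shift S' by S'|x,R⟩ = |x−1,R⟩ and S'|x,L⟩ = |x+1,L⟩, the Hadamard coin H_c by H_c|x,R⟩ = (1/√2)(|x,R⟩ + |x,L⟩) and H_c|x,L⟩ = (1/√2)(|x,R⟩ − |x,L⟩), and the walk step W = H_c ∘ S'. Then the extremal amplitudes after t steps satisfy ⟨q−t, R | W^t | q, R⟩ = (1/√2)^t and ⟨q+t, L | W^t | q, L⟩ = (−1/√2)^t; in particular both are nonzero. -/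
/-!
One walk step feeds the amplitude at position `x` only from `x ± 1`, so after `s` steps from `q`
the state lives on the images in `ZMod P` of `q + j`, `|j| ≤ s`. Since `2t < P`, the neighbour
`q ∓ (s + 2)` of the extremal position `q ∓ (s + 1)` lies outside this cone, so the extremal
amplitude has a single predecessor and is multiplied by `±1/√2` at every step.
-/

namespace HadamardWalk

variable {P : ℕ}

/-- `H_c ∘ S'` in coordinates, for the coin `r • [[1, 1], [1, -1]]`; `true` is the coin `R`. -/
def step (r : ℂ) :
    EuclideanSpace ℂ (ZMod P × Bool) →ₗ[ℂ] EuclideanSpace ℂ (ZMod P × Bool) where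
  toFun ψ := WithLp.toLp 2 fun
    | (x, true) => r * (ψ (x + 1, true) + ψ (x - 1, false))
    | (x, false) => r * (ψ (x + 1, true) - ψ (x - 1, false))
  map_add' ψ φ := by
    ext ⟨x, c⟩
    cases c <;> simp only [PiLp.add_apply] <;> ring
  map_smul' a ψ := by
    ext ⟨x, c⟩
    cases c <;> simp only [PiLp.smul_apply, smul_eq_mul, RingHom.id_apply] <;> ring

@[simp]
lemma step_apply_true (r : ℂ) (ψ : EuclideanSpace ℂ (ZMod P × Bool)) (x : ZMod P) :
    step r ψ (x, true) = r * (ψ (x + 1, true) + ψ (x - 1, false)) := rfl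

@[simp]
lemma step_apply_false (r : ℂ) (ψ : EuclideanSpace ℂ (ZMod P × Bool)) (x : ZMod P) :
    step r ψ (x, false) = r * (ψ (x + 1, true) - ψ (x - 1, false)) := rfl

lemma comp_eq_step [NeZero P] {r : ℂ}
    {S' Hc : EuclideanSpace ℂ (ZMod P × Bool) →ₗ[ℂ] EuclideanSpace ℂ (ZMod P × Bool)}
    (hSR : ∀ x : ZMod P,
      S' (EuclideanSpace.single (x, true) 1) = EuclideanSpace.single (x - 1, true) 1)
    (hSL : ∀ x : ZMod P,
      S' (EuclideanSpace.single (x, false) 1) = EuclideanSpace.single (x + 1, false) 1)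
    (hHR : ∀ x : ZMod P,
      Hc (EuclideanSpace.single (x, true) 1) =
        r • (EuclideanSpace.single (x, true) 1 + EuclideanSpace.single (x, false) 1))
    (hHL : ∀ x : ZMod P,
      Hc (EuclideanSpace.single (x, false) 1) =
        r • (EuclideanSpace.single (x, true) 1 - EuclideanSpace.single (x, false) 1)) :
    Hc ∘ₗ S' = step r := by
  refine (EuclideanSpace.basisFun (ZMod P × Bool) ℂ).toBasis.ext fun ⟨y, c⟩ => ?_
  ext ⟨x, c'⟩
  cases c <;> cases c' <;>
    simp [hSR, hSL, hHR, hHL, eq_sub_iff_add_eq, sub_eq_iff_eq_add]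

def lightCone (q : ZMod P) (s : ℕ) : Set (ZMod P) := {x | ∃ j : ℤ, |j| ≤ s ∧ x = q + j}

lemma add_one_notMem_lightCone {q x : ZMod P} {s : ℕ} (hx : x ∉ lightCone q (s + 1)) :
    x + 1 ∉ lightCone q s := by
  rintro ⟨j, hj, hxj⟩
  refine hx ⟨j - 1, by rw [abs_le] at hj ⊢; push_cast; omega, ?_⟩
  push_cast
  linear_combination hxj

lemma sub_one_notMem_lightCone {q x : ZMod P} {s : ℕ} (hx : x ∉ lightCone q (s + 1)) :
    x - 1 ∉ lightCone q s := by
  rintro ⟨j, hj, hxj⟩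
  refine hx ⟨j + 1, by rw [abs_le] at hj ⊢; push_cast; omega, ?_⟩
  push_cast
  linear_combination hxj

lemma add_intCast_notMem_lightCone (q : ZMod P) {s : ℕ} {k : ℤ} (hk : s < |k|)
    (hkP : |k| + s < P) : q + k ∉ lightCone q s := by
  rintro ⟨j, hj, hkj⟩
  have hdvd : (P : ℤ) ∣ j - k :=
    (ZMod.intCast_eq_intCast_iff_dvd_sub k j P).1 (add_left_cancel hkj)
  have hjk : j - k ≠ 0 := sub_ne_zero.2 fun h => by rw [h] at hj; linarith
  exact hjk (Int.eq_zero_of_abs_lt_dvd hdvd ((abs_sub j k).trans_lt (by linarith)))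

lemma step_pow_single_apply_eq_zero (r : ℂ) (q : ZMod P) (c : Bool) {s : ℕ} {x : ZMod P}
    (hx : x ∉ lightCone q s) (c' : Bool) :
    (step r ^ s) (EuclideanSpace.single (q, c) 1) (x, c') = 0 := by
  induction s generalizing x c' with
  | zero =>
    have hxq : x ≠ q := fun h => hx ⟨0, by simp, by simp [h]⟩
    simp [hxq]
  | succ s ih =>
    rw [pow_succ', Module.End.mul_apply]
    cases c' <;> simp [ih (add_one_notMem_lightCone hx), ih (sub_one_notMem_lightCone hx)]

lemma step_pow_single_true_apply (r : ℂ) (q : ZMod P) {s : ℕ} (hs : 2 * s < P) :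
    (step r ^ s) (EuclideanSpace.single (q, true) 1) (q - s, true) = r ^ s := by
  induction s with
  | zero => simp
  | succ s ih =>
    have h1 : q - ((s + 1 : ℕ) : ZMod P) + 1 = q - s := by push_cast; ring
    have h2 : q - ((s + 1 : ℕ) : ZMod P) - 1 = q + ((-(s + 2) : ℤ) : ZMod P) := by
      push_cast; ring
    have hout : q + ((-(s + 2) : ℤ) : ZMod P) ∉ lightCone q s :=
      add_intCast_notMem_lightCone q (by rw [abs_of_neg (by omega)]; omega)
        (by rw [abs_of_neg (by omega)]; omega)
    rw [pow_succ', Module.End.mul_apply, step_apply_true, h1, h2, ih (by omega),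
      step_pow_single_apply_eq_zero r q true hout, pow_succ]
    ring

lemma step_pow_single_false_apply (r : ℂ) (q : ZMod P) {s : ℕ} (hs : 2 * s < P) :
    (step r ^ s) (EuclideanSpace.single (q, false) 1) (q + s, false) = (-r) ^ s := by
  induction s with
  | zero => simp
  | succ s ih =>
    have h1 : q + ((s + 1 : ℕ) : ZMod P) + 1 = q + ((s + 2 : ℤ) : ZMod P) := by
      push_cast; ring
    have h2 : q + ((s + 1 : ℕ) : ZMod P) - 1 = q + s := by push_cast; ring
    have hout : q + ((s + 2 : ℤ) : ZMod P) ∉ lightCone q s :=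
      add_intCast_notMem_lightCone q (by rw [abs_of_pos (by omega)]; omega)
        (by rw [abs_of_pos (by omega)]; omega)
    rw [pow_succ', Module.End.mul_apply, step_apply_false, h1, h2, ih (by omega),
      step_pow_single_apply_eq_zero r q false hout, pow_succ]
    ring

end HadamardWalk

/-- Extremal amplitudes of the Hadamard walk `W = H_c ∘ S'` (shift before coin) on a
cycle of `P` nodes with `2t < P`: `⟨q-t, R| W^t |q, R⟩ = (1/√2)^t` and
`⟨q+t, L| W^t |q, L⟩ = (-1/√2)^t`; in particular both are nonzero.
Coin `true` is `R`, `false` is `L`. -/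
theorem stmt_12 (P t : ℕ) [NeZero P] (ht : 2 * t < P) (q : ZMod P)
    (S' Hc : EuclideanSpace ℂ (ZMod P × Bool) →ₗ[ℂ] EuclideanSpace ℂ (ZMod P × Bool))
    (hSR : ∀ x : ZMod P,
      S' (EuclideanSpace.single (x, true) 1) = EuclideanSpace.single (x - 1, true) 1)
    (hSL : ∀ x : ZMod P,
      S' (EuclideanSpace.single (x, false) 1) = EuclideanSpace.single (x + 1, false) 1)
    (hHR : ∀ x : ZMod P,
      Hc (EuclideanSpace.single (x, true) 1) =
        (1 / Real.sqrt 2 : ℂ) • (EuclideanSpace.single (x, true) 1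
          + EuclideanSpace.single (x, false) 1))
    (hHL : ∀ x : ZMod P,
      Hc (EuclideanSpace.single (x, false) 1) =
        (1 / Real.sqrt 2 : ℂ) • (EuclideanSpace.single (x, true) 1
          - EuclideanSpace.single (x, false) 1)) :
    ((((Hc ∘ₗ S') ^ t) (EuclideanSpace.single (q, true) 1)) ((q - t, true))
        = (1 / Real.sqrt 2 : ℂ) ^ t ∧
      (((Hc ∘ₗ S') ^ t) (EuclideanSpace.single (q, false) 1)) ((q + t, false))
        = (-(1 / Real.sqrt 2) : ℂ) ^ t) ∧
    ((((Hc ∘ₗ S') ^ t) (EuclideanSpace.single (q, true) 1)) ((q - t, true)) ≠ 0 ∧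
      (((Hc ∘ₗ S') ^ t) (EuclideanSpace.single (q, false) 1)) ((q + t, false)) ≠ 0) := by
  have hr : (1 / Real.sqrt 2 : ℂ) ≠ 0 := by simp
  rw [HadamardWalk.comp_eq_step hSR hSL hHR hHL, HadamardWalk.step_pow_single_true_apply _ q ht,
    HadamardWalk.step_pow_single_false_apply _ q ht]
  exact ⟨⟨rfl, rfl⟩, pow_ne_zero _ hr, pow_ne_zero _ (neg_ne_zero.2 hr)⟩
end

section
/- Let P be an odd positive integer. On H = EuclideanSpace ℂ (ZMod P × Bool) with basis |x, c⟩, define the shift S' by S'|x,R⟩ = |x−1,R⟩ and S'|x,L⟩ = |x+1,L⟩, the Hadamard coin H_c by H_c|x,R⟩ = (1/√2)(|x,R⟩ + |x,L⟩) and H_c|x,L⟩ = (1/√2)(|x,R⟩ − |x,L⟩), and the walk step W = H_c ∘ S'. Then for every two position-coin pairs (l, s) and (l', s') in ZMod P × {R, L}, there exist a natural number T ≥ 1 and an initial basis state |l₀, s₀⟩ such that ⟨l, s | W^T | l₀, s₀⟩ ≠ 0 and ⟨l', s' | W^T | l₀, s₀⟩ ≠ 0. -/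
/-! After one step from `|x, R⟩` the walk sits at `x - 1`, and every further step moves amplitude
by `±1`, so after `n + 1` steps it is supported on the light cone `x - 1 - n + 2j`, `j ≤ n`. Each
end of the cone is fed by a single end of the previous cone, so it carries amplitude
`±(1/√2)^(n+1) ≠ 0`; the point that would cancel it lies outside the cone modulo `P` because
`2m ≠ 0` in `ZMod P` for `0 < m < P` when `P` is odd. Halving `l' - l` modulo `P` gives `n` and
`x` for which the two ends of the cone are `l` and `l'`. -/

open EuclideanSpace

variable {P : ℕ}

theorem two_mul_natCast_ne_zero (hP : Odd P) {m : ℕ} (h0 : 0 < m) (hm : m < P) :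
    2 * (m : ZMod P) ≠ 0 := by
  rw [← Nat.cast_ofNat, ← Nat.cast_mul, Ne, ZMod.natCast_eq_zero_iff]
  intro hdvd
  have := Nat.le_of_dvd h0 ((Nat.coprime_two_right.mpr hP).dvd_of_dvd_mul_left hdvd)
  omega

theorem exists_two_mul_natCast_eq [NeZero P] (hP : Odd P) (u : ZMod P) :
    ∃ n < P, 2 * (n : ZMod P) = u := by
  refine ⟨(2⁻¹ * u).val, ZMod.val_lt _, ?_⟩
  rw [ZMod.natCast_zmod_val, ← mul_assoc]
  have h2 := ZMod.coe_mul_inv_eq_one 2 (Nat.coprime_two_left.mpr hP)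
  rw [Nat.cast_ofNat] at h2
  rw [h2, one_mul]

def hadamardStep {R : Type*} [CommRing R] (a : R) (v : ZMod P × Bool → R) :
    ZMod P × Bool → R :=
  fun (y, c) => a * (v (y + 1, true) + (if c then 1 else -1) * v (y - 1, false))

@[simp]
theorem hadamardStep_apply {R : Type*} [CommRing R] (a : R) (v : ZMod P × Bool → R) (y : ZMod P)
    (c : Bool) :
    hadamardStep a v (y, c) = a * (v (y + 1, true) + (if c then 1 else -1) * v (y - 1, false)) :=
  rfl

theorem hadamardWalk_apply [NeZero P]
    (S' Hc : EuclideanSpace ℂ (ZMod P × Bool) →ₗ[ℂ] EuclideanSpace ℂ (ZMod P × Bool))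
    (hSR : ∀ x : ZMod P,
      S' (EuclideanSpace.single (x, true) 1) = EuclideanSpace.single (x - 1, true) 1)
    (hSL : ∀ x : ZMod P,
      S' (EuclideanSpace.single (x, false) 1) = EuclideanSpace.single (x + 1, false) 1)
    (hHR : ∀ x : ZMod P,
      Hc (EuclideanSpace.single (x, true) 1) =
        (1 / Real.sqrt 2 : ℂ) • (EuclideanSpace.single (x, true) 1
          + EuclideanSpace.single (x, false) 1))
    (hHL : ∀ x : ZMod P,
      Hc (EuclideanSpace.single (x, false) 1) =
        (1 / Real.sqrt 2 : ℂ) • (EuclideanSpace.single (x, true) 1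
          - EuclideanSpace.single (x, false) 1))
    (v : EuclideanSpace ℂ (ZMod P × Bool)) :
    ⇑(Hc (S' v)) = hadamardStep (1 / Real.sqrt 2 : ℂ) v := by
  funext ⟨y, c⟩
  have key : (proj (y, c) : EuclideanSpace ℂ (ZMod P × Bool) →L[ℂ] ℂ).toLinearMap ∘ₗ Hc ∘ₗ S'
      = (1 / Real.sqrt 2 : ℂ) • ((proj (y + 1, true)).toLinearMap
          + (if c then 1 else -1 : ℂ) • (proj (y - 1, false)).toLinearMap) := by
    refine (basisFun _ ℂ).toBasis.ext fun ⟨x, b⟩ => ?_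
    cases b <;> cases c <;>
      simp [hSR, hSL, hHR, hHL, PiLp.single_apply, sub_eq_iff_eq_add, eq_sub_iff_add_eq]
  exact LinearMap.congr_fun key v

namespace hadamardStep

variable {R : Type*} [CommRing R] (a : R) (x : ZMod P)

local notation "ψ" n => (hadamardStep a)^[n] (Pi.single (x, true) 1)

theorem iterate_succ_apply (n : ℕ) (y : ZMod P) (c : Bool) :
    (ψ (n + 1)) (y, c) =
      a * ((ψ n) (y + 1, true) + (if c then 1 else -1) * (ψ n) (y - 1, false)) := by
  rw [Function.iterate_succ_apply']; rfl

theorem iterate_succ_apply_eq_zero (n : ℕ) {y : ZMod P} (hy : ∀ j ≤ n, y ≠ x - 1 - n + 2 * j)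
    (c : Bool) :
    (ψ (n + 1)) (y, c) = 0 := by
  induction n generalizing y c with
  | zero =>
    have : y + 1 ≠ x := fun h => hy 0 le_rfl (by simp [← h])
    rw [iterate_succ_apply]
    simp [this]
  | succ n ih =>
    rw [iterate_succ_apply, ih, ih, mul_zero, add_zero, mul_zero]
    · intro j hj h
      exact hy (j + 1) (by omega) (by push_cast at h ⊢; linear_combination h)
    · intro j hj h
      exact hy j (by omega) (by push_cast at h ⊢; linear_combination h)

theorem iterate_succ_apply_left_end (hP : Odd P) (n : ℕ) (hn : n < P) (c : Bool) :
    (ψ (n + 1)) (x - 1 - n, c) = a ^ (n + 1) := by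
  induction n generalizing c with
  | zero => simp
  | succ n ih =>
    have hbeyond : (ψ (n + 1)) (x - 1 - (n + 1 : ℕ) - 1, false) = 0 := by
      refine iterate_succ_apply_eq_zero a x n (fun j hj h => ?_) false
      refine two_mul_natCast_ne_zero hP (m := j + 1) (by omega) (by omega) ?_
      push_cast at h ⊢
      linear_combination -h
    have hpos : x - 1 - (n + 1 : ℕ) + 1 = x - 1 - n := by push_cast; ring
    rw [iterate_succ_apply, hpos, ih (by omega), hbeyond]
    ring

theorem iterate_succ_succ_apply_right_end_eq_mul (hP : Odd P) (n : ℕ) (hn : n + 1 < P)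
    (c : Bool) :
    (ψ (n + 2)) (x + n, c) =
      (if c then 1 else -1) * a * (ψ (n + 1)) (x + n - 1, false) := by
  have hbeyond : (ψ (n + 1)) (x + n + 1, true) = 0 := by
    refine iterate_succ_apply_eq_zero a x n (fun j hj h => ?_) true
    refine two_mul_natCast_ne_zero hP (m := n + 1 - j) (by omega) (by omega) ?_
    push_cast [Nat.cast_sub (show j ≤ n + 1 by omega)] at h ⊢
    linear_combination h
  rw [iterate_succ_apply, hbeyond]
  ring

theorem iterate_succ_apply_right_end_false (hP : Odd P) (n : ℕ) (hn : n < P) :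
    (ψ (n + 1)) (x + n - 1, false) = (-1) ^ n * a ^ (n + 1) := by
  induction n with
  | zero => simp
  | succ n ih =>
    have hpos : x + (n + 1 : ℕ) - 1 = x + n := by push_cast; ring
    rw [hpos, iterate_succ_succ_apply_right_end_eq_mul a x hP n hn, ih (by omega)]
    simp only [Bool.false_eq_true, if_false]
    ring

theorem iterate_succ_succ_apply_right_end (hP : Odd P) (n : ℕ) (hn : n + 1 < P) (c : Bool) :
    (ψ (n + 2)) (x + n, c) = (if c then 1 else -1) * (-1) ^ n * a ^ (n + 2) := by
  rw [iterate_succ_succ_apply_right_end_eq_mul a x hP n hn,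
    iterate_succ_apply_right_end_false a x hP n (by omega)]
  ring

theorem iterate_succ_apply_ends_ne_zero [IsDomain R] (ha : a ≠ 0) (hP : Odd P) (n : ℕ)
    (hn : n < P) (c c' : Bool) :
    (ψ (n + 1)) (x - 1 - n, c) ≠ 0 ∧ (ψ (n + 1)) (x + n - 1, c') ≠ 0 := by
  refine ⟨by rw [iterate_succ_apply_left_end a x hP n hn]; exact pow_ne_zero _ ha, ?_⟩
  cases n with
  | zero => simpa using (iterate_succ_apply_left_end a x hP 0 hn c').trans_ne (pow_ne_zero _ ha)
  | succ n =>
    have hpos : x + (n + 1 : ℕ) - 1 = x + n := by push_cast; ring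
    rw [hpos, iterate_succ_succ_apply_right_end a x hP n hn]
    cases c' <;> simp [ha]

end hadamardStep

/-- For the Hadamard walk `W = H_c ∘ S'` (shift before coin) on a cycle with an odd
number `P` of nodes: for any two position-coin pairs `(l, s)` and `(l', s')` there are
a number of steps `T ≥ 1` and an initial basis state `|l₀, s₀⟩` such that `W^T |l₀, s₀⟩`
has nonzero amplitude on both `|l, s⟩` and `|l', s'⟩`.
Coin `true` is `R`, `false` is `L`. -/
theorem stmt_13 (P : ℕ) [NeZero P] (hPodd : Odd P)
    (S' Hc : EuclideanSpace ℂ (ZMod P × Bool) →ₗ[ℂ] EuclideanSpace ℂ (ZMod P × Bool))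
    (hSR : ∀ x : ZMod P,
      S' (EuclideanSpace.single (x, true) 1) = EuclideanSpace.single (x - 1, true) 1)
    (hSL : ∀ x : ZMod P,
      S' (EuclideanSpace.single (x, false) 1) = EuclideanSpace.single (x + 1, false) 1)
    (hHR : ∀ x : ZMod P,
      Hc (EuclideanSpace.single (x, true) 1) =
        (1 / Real.sqrt 2 : ℂ) • (EuclideanSpace.single (x, true) 1
          + EuclideanSpace.single (x, false) 1))
    (hHL : ∀ x : ZMod P,
      Hc (EuclideanSpace.single (x, false) 1) =
        (1 / Real.sqrt 2 : ℂ) • (EuclideanSpace.single (x, true) 1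
          - EuclideanSpace.single (x, false) 1))
    (l l' : ZMod P) (s s' : Bool) :
    ∃ (T : ℕ) (l₀ : ZMod P) (s₀ : Bool), 1 ≤ T ∧
      (((Hc ∘ₗ S') ^ T) (EuclideanSpace.single (l₀, s₀) 1)) ((l, s)) ≠ 0 ∧
      (((Hc ∘ₗ S') ^ T) (EuclideanSpace.single (l₀, s₀) 1)) ((l', s')) ≠ 0 := by
  obtain ⟨n, hn, h2n⟩ := exists_two_mul_natCast_eq hPodd (l' - l)
  set x : ZMod P := l + 1 + n
  have hW : ⇑(((Hc ∘ₗ S') ^ (n + 1)) (single (x, true) 1)) =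
      (hadamardStep (1 / Real.sqrt 2 : ℂ))^[n + 1] (Pi.single (x, true) 1) := by
    rw [Module.End.pow_apply]
    exact Function.Semiconj.iterate_right (hadamardWalk_apply S' Hc hSR hSL hHR hHL) _ _
  have ha : (1 / Real.sqrt 2 : ℂ) ≠ 0 := by simp
  obtain ⟨hleft, hright⟩ :=
    hadamardStep.iterate_succ_apply_ends_ne_zero _ x ha hPodd n hn s s'
  have hl : x - 1 - n = l := by ring
  have hl' : x + n - 1 = l' := by linear_combination h2n
  rw [hl] at hleft
  rw [hl'] at hright
  exact ⟨n + 1, x, true, le_add_self, by rwa [hW], by rwa [hW]⟩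
end
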